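/- For real numbers p > 1 and for the function h(z,w) = (z+w)₊^p - z₊^p - p·z₊^{p-1}w (with t₊ = max(t,0)): there exists a constant c > 0 depending only on p such that |h(z,w)| ≤ c(|w|^{min(2,p)} + z₊^{p-γ}|w|^{1+γ}) for all z ≥ 0 and w ∈ ℝ with |w| ≤ z + 1, where γ = min(1, p-1). -/
import Mathlib


open Real

open Set in
private lemma mvt_rpow {q : ℝ} (hq : 1 ≤ q) {a b : ℝ} (ha : 0 ≤ a) (hab : a < b) :
    ∃ ξ, a < ξ ∧ ξ < b ∧ b ^ q - a ^ q = q * ξ ^ (q - 1) * (b - a) := by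
  have hq0 : (0:ℝ) ≤ q := le_trans zero_le_one hq
  have hcont : ContinuousOn (fun x : ℝ => x ^ q) (Icc a b) :=
    continuousOn_id.rpow_const fun x _ => Or.inr hq0
  have hderiv : ∀ x ∈ Ioo a b, HasDerivAt (fun x : ℝ => x ^ q) (q * x ^ (q - 1)) x :=
    fun x hx => Real.hasDerivAt_rpow_const (Or.inl (ne_of_gt (lt_of_le_of_lt ha hx.1)))
  obtain ⟨ξ, hξ, heq⟩ := exists_hasDerivAt_eq_slope (fun x : ℝ => x ^ q)
    (fun x => q * x ^ (q - 1)) hab hcont hderiv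
  have hba : b - a ≠ 0 := sub_ne_zero.2 hab.ne'
  refine ⟨ξ, hξ.1, hξ.2, ?_⟩
  rw [heq, div_mul_cancel₀ _ hba]

open Set in
private lemma holder_rpow {q : ℝ} (hq0 : 0 ≤ q) (hq1 : q ≤ 1) {a b : ℝ} (ha : 0 ≤ a)
    (hb : 0 ≤ b) : |a ^ q - b ^ q| ≤ |a - b| ^ q := by
  wlog hab : b ≤ a generalizing a b
  · rw [abs_sub_comm, abs_sub_comm a b]; exact this hb ha (le_of_not_ge hab)
  have key : a ^ q ≤ (a - b) ^ q + b ^ q := by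
    have h := NNReal.rpow_add_le_add_rpow (a - b).toNNReal b.toNNReal hq0 hq1
    have hadd : (a - b).toNNReal + b.toNNReal = a.toNNReal := by
      rw [← Real.toNNReal_add (by linarith) hb]; ring_nf
    rw [hadd] at h
    have := NNReal.coe_le_coe.2 h
    push_cast at this
    rwa [Real.coe_toNNReal _ ha, Real.coe_toNNReal _ (by linarith), Real.coe_toNNReal _ hb] at this
  rw [abs_of_nonneg (sub_nonneg.2 (Real.rpow_le_rpow hb hab hq0)),
      abs_of_nonneg (sub_nonneg.2 hab)]
  linarith

open Set in
private lemma lip_rpow {q : ℝ} (hq : 1 ≤ q) {a b : ℝ} (ha : 0 ≤ a) (hb : 0 ≤ b) :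
    |a ^ q - b ^ q| ≤ q * max a b ^ (q - 1) * |a - b| := by
  wlog hab : b ≤ a generalizing a b
  · rw [abs_sub_comm, abs_sub_comm a b, max_comm]; exact this hb ha (le_of_not_ge hab)
  rcases eq_or_lt_of_le hab with rfl | hlt
  · simp
  obtain ⟨ξ, h1, h2, heq⟩ := mvt_rpow hq hb hlt
  have hq0 : (0:ℝ) ≤ q := le_trans zero_le_one hq
  rw [abs_of_nonneg (sub_nonneg.2 (Real.rpow_le_rpow hb hab hq0)),
      abs_of_nonneg (sub_nonneg.2 hab), heq]
  have hξ0 : 0 ≤ ξ := le_trans hb h1.le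
  have hle : ξ ^ (q-1) ≤ max a b ^ (q-1) :=
    Real.rpow_le_rpow hξ0 (le_trans h2.le (le_max_left a b)) (by linarith)
  exact mul_le_mul_of_nonneg_right
    (mul_le_mul_of_nonneg_left hle (by linarith)) (sub_nonneg.2 hab)

open Set in
private lemma add_one_rpow_le {q z : ℝ} (hq : 0 ≤ q) (hz : 0 ≤ z) :
    (z + 1) ^ q ≤ 2 ^ q * (1 + z ^ q) := by
  have h2 : (0:ℝ) ≤ 2 ^ q := Real.rpow_nonneg (by norm_num) q
  have hzq : (0:ℝ) ≤ z ^ q := Real.rpow_nonneg hz q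
  rcases le_total z 1 with h | h
  · calc (z+1)^q ≤ 2^q := Real.rpow_le_rpow (by linarith) (by linarith) hq
    _ ≤ 2^q * (1 + z^q) := le_mul_of_one_le_right h2 (by linarith)
  · calc (z+1)^q ≤ (2*z)^q := Real.rpow_le_rpow (by linarith) (by linarith) hq
    _ = 2^q * z^q := Real.mul_rpow (by norm_num) hz
    _ ≤ 2^q * (1 + z^q) := by nlinarith

open Set in
private lemma taylor_formula {p : ℝ} (hp : 1 < p) {z w : ℝ} (hz : 0 ≤ z)
    (hzw : 0 ≤ z + w) (hw : w ≠ 0) :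
    ∃ ξ, 0 ≤ ξ ∧ |ξ - z| ≤ |w| ∧ ξ ≤ z + |w| ∧
      (z + w) ^ p - z ^ p - p * z ^ (p-1) * w = p * (ξ ^ (p-1) - z ^ (p-1)) * w := by
  rcases lt_or_gt_of_ne hw with hneg | hpos
  · obtain ⟨ξ, h1, h2, heq⟩ := mvt_rpow hp.le hzw (by linarith : z + w < z)
    have haw : |w| = -w := abs_of_neg hneg
    refine ⟨ξ, by linarith, ?_, by rw [haw]; linarith, by nlinarith [heq]⟩
    rw [abs_of_nonpos (by linarith), haw]; linarith
  · obtain ⟨ξ, h1, h2, heq⟩ := mvt_rpow hp.le hz (by linarith : z < z + w)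
    have haw : |w| = w := abs_of_pos hpos
    refine ⟨ξ, by linarith, ?_, by rw [haw]; linarith, by nlinarith [heq]⟩
    rw [abs_of_nonneg (by linarith), haw]; linarith

-- z+w < 0 case, any p > 1 : |h| ≤ (1+p)|w|^p
private lemma neg_case {p : ℝ} (hp : 1 < p) {z w : ℝ} (hz : 0 ≤ z) (hzw : z + w < 0) :
    |max (z + w) 0 ^ p - z ^ p - p * z ^ (p-1) * w| ≤ (1 + p) * |w| ^ p := by
  have hwneg : w < 0 := by linarith
  have haw : |w| = -w := abs_of_neg hwneg
  have hzle : z ≤ |w| := by rw [haw]; linarith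
  have hmax : max (z + w) 0 = 0 := max_eq_right hzw.le
  have hwpos : 0 < |w| := by rw [haw]; linarith
  rw [hmax, Real.zero_rpow (by positivity)]
  have h1 : z ^ p ≤ |w| ^ p := Real.rpow_le_rpow hz hzle (by positivity)
  have h2 : z ^ (p-1) ≤ |w| ^ (p-1) := Real.rpow_le_rpow hz hzle (by linarith)
  have h3 : |w| ^ (p-1) * |w| = |w| ^ p := by
    rw [← Real.rpow_add_one (ne_of_gt hwpos)]; ring_nf
  have hz1 : 0 ≤ z ^ (p-1) := Real.rpow_nonneg hz _
  have hzp : 0 ≤ z ^ p := Real.rpow_nonneg hz _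
  have key : z ^ (p-1) * |w| ≤ |w| ^ (p-1) * |w| :=
    mul_le_mul_of_nonneg_right h2 (abs_nonneg w)
  calc |0 - z ^ p - p * z ^ (p-1) * w|
      = |-(z ^ p + p * z ^ (p-1) * w)| := by ring_nf
    _ = |z ^ p + p * z ^ (p-1) * w| := abs_neg _
    _ ≤ |z ^ p| + |p * z ^ (p-1) * w| := abs_add_le _ _
    _ = z ^ p + p * (z ^ (p-1) * |w|) := by
        rw [abs_of_nonneg hzp, abs_mul, abs_mul, abs_of_pos (by linarith : (0:ℝ) < p),
          abs_of_nonneg hz1]; ring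
    _ ≤ |w| ^ p + p * (|w| ^ (p-1) * |w|) := by nlinarith
    _ = (1 + p) * |w| ^ p := by rw [h3]; ring

open Set in
private lemma caseA {p : ℝ} (hp : 1 < p) (hp2 : p ≤ 2) {z w : ℝ} (hz : 0 ≤ z) :
    |max (z + w) 0 ^ p - z ^ p - p * z ^ (p-1) * w| ≤ (1 + p) * |w| ^ p := by
  rcases eq_or_ne w 0 with rfl | hw
  · rw [add_zero, max_eq_left hz, mul_zero, sub_zero, sub_self, abs_zero,
      Real.zero_rpow (by positivity : p ≠ 0), mul_zero]
  rcases lt_or_ge (z + w) 0 with hneg | hpos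
  · exact neg_case hp hz hneg
  obtain ⟨ξ, hξ0, hξd, hξu, heq⟩ := taylor_formula hp hz hpos hw
  rw [max_eq_left hpos, heq]
  have hwpos : 0 < |w| := abs_pos.2 hw
  have h1 : |ξ ^ (p-1) - z ^ (p-1)| ≤ |ξ - z| ^ (p-1) :=
    holder_rpow (by linarith) (by linarith) hξ0 hz
  have h2 : |ξ - z| ^ (p-1) ≤ |w| ^ (p-1) :=
    Real.rpow_le_rpow (abs_nonneg _) hξd (by linarith)
  have h3 : |w| ^ (p-1) * |w| = |w| ^ p := by
    rw [← Real.rpow_add_one (ne_of_gt hwpos)]; ring_nf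
  calc |p * (ξ ^ (p-1) - z ^ (p-1)) * w| = p * |ξ ^ (p-1) - z ^ (p-1)| * |w| := by
        rw [abs_mul, abs_mul, abs_of_pos (by linarith : (0:ℝ) < p)]
    _ ≤ p * (|w| ^ (p-1) * |w|) := by
        have := mul_le_mul_of_nonneg_right (h1.trans h2) (abs_nonneg w)
        nlinarith
    _ ≤ (1 + p) * |w| ^ p := by rw [h3]; nlinarith [Real.rpow_nonneg (abs_nonneg w) p]

open Set in
private lemma caseB {p : ℝ} (hp2 : 2 ≤ p) {z w : ℝ} (hz : 0 ≤ z) (hwb : |w| ≤ z + 1) :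
    |max (z + w) 0 ^ p - z ^ p - p * z ^ (p-1) * w|
      ≤ (2*p*(p+1)*2^(2*p)) * ((1 + z ^ (p-1)) * (|w| * |w|)) := by
  have hp : 1 < p := lt_of_lt_of_le one_lt_two hp2
  have hzp1 : 0 ≤ z ^ (p-1) := Real.rpow_nonneg hz _
  have hK0 : (0:ℝ) ≤ 1 + z ^ (p-1) := by linarith
  have h4 : (0:ℝ) < 2 ^ (2*p) := Real.rpow_pos_of_pos (by norm_num) _
  -- z^(p-2) ≤ 1 + z^(p-1)
  have hB : z ^ (p-2) ≤ 1 + z ^ (p-1) := by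
    rcases le_total z 1 with h | h
    · have := Real.rpow_le_one hz h (by linarith : (0:ℝ) ≤ p-2)
      linarith
    · have := Real.rpow_le_rpow_of_exponent_le h (by linarith : p-2 ≤ p-1)
      linarith
  have h2pow : (2:ℝ) ^ (p-2) * 2 = 2 ^ (p-1) := by
    rw [← Real.rpow_add_one (by norm_num : (2:ℝ) ≠ 0)]; ring_nf
  have h2n : (0:ℝ) ≤ 2 ^ (p-2) := Real.rpow_nonneg (by norm_num) _
  have hzz : (z+1) ^ (p-2) ≤ 2 ^ (p-1) * (1 + z ^ (p-1)) := by
    calc (z+1) ^ (p-2) ≤ 2 ^ (p-2) * (1 + z ^ (p-2)) :=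
          add_one_rpow_le (by linarith) hz
      _ ≤ 2 ^ (p-2) * (2 * (1 + z ^ (p-1))) := by nlinarith
      _ = 2 ^ (p-1) * (1 + z ^ (p-1)) := by rw [← h2pow]; ring
  have h2le4 : (2:ℝ) ^ (p-1) ≤ 2 ^ (2*p) :=
    Real.rpow_le_rpow_of_exponent_le one_le_two (by linarith)
  rcases eq_or_ne w 0 with rfl | hw
  · rw [add_zero, max_eq_left hz, mul_zero, sub_zero, sub_self, abs_zero]
    positivity
  have hwpos : 0 < |w| := abs_pos.2 hw
  have hs0 : (0:ℝ) ≤ |w| * |w| := mul_nonneg (abs_nonneg w) (abs_nonneg w)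
  rcases lt_or_ge (z + w) 0 with hneg | hpos
  · have h1 := neg_case hp hz hneg
    have hsplit : |w| ^ p = |w| ^ (p-2) * (|w| * |w|) := by
      rw [show |w| * |w| = |w| ^ (2:ℝ) by
            rw [show (2:ℝ) = ((2:ℕ):ℝ) by norm_num, Real.rpow_natCast]; ring,
          ← Real.rpow_add hwpos]
      ring_nf
    have hw2 : |w| ^ (p-2) ≤ 2 ^ (p-1) * (1 + z ^ (p-1)) :=
      le_trans (Real.rpow_le_rpow (abs_nonneg w) hwb (by linarith)) hzz
    have hcoef : (1+p) * 2 ^ (p-1) ≤ 2*p*(p+1)*2^(2*p) := by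
      have c1 : (1+p) * 2 ^ (p-1) ≤ (1+p) * 2 ^ (2*p) :=
        mul_le_mul_of_nonneg_left h2le4 (by linarith)
      have c2 : (0:ℝ) ≤ (2*p*(p+1) - (1+p)) * 2 ^ (2*p) :=
        mul_nonneg (by nlinarith) h4.le
      nlinarith
    calc |max (z + w) 0 ^ p - z ^ p - p * z ^ (p-1) * w| ≤ (1 + p) * |w| ^ p := h1
      _ = (1+p) * (|w| ^ (p-2) * (|w| * |w|)) := by rw [hsplit]
      _ ≤ (1+p) * ((2 ^ (p-1) * (1 + z ^ (p-1))) * (|w| * |w|)) := by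
          have := mul_le_mul_of_nonneg_right hw2 hs0
          nlinarith
      _ = ((1+p) * 2 ^ (p-1)) * ((1 + z ^ (p-1)) * (|w| * |w|)) := by ring
      _ ≤ (2*p*(p+1)*2^(2*p)) * ((1 + z ^ (p-1)) * (|w| * |w|)) :=
          mul_le_mul_of_nonneg_right hcoef (mul_nonneg hK0 hs0)
  · obtain ⟨ξ, hξ0, hξd, hξu, heq⟩ := taylor_formula hp hz hpos hw
    rw [max_eq_left hpos, heq]
    set M := max ξ z with hMdef
    have hMn : 0 ≤ M := le_trans hz (le_max_right ξ z)
    have hM2 : M ≤ 2*(z+1) := by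
      have hξb : ξ ≤ 2*z+1 := by linarith
      exact max_le (by linarith) (by linarith)
    have hMp : M ^ (p-2) ≤ 2 ^ (2*p) * (1 + z ^ (p-1)) := by
      calc M ^ (p-2) ≤ (2*(z+1)) ^ (p-2) :=
            Real.rpow_le_rpow hMn hM2 (by linarith)
        _ = 2 ^ (p-2) * (z+1) ^ (p-2) := Real.mul_rpow (by norm_num) (by linarith)
        _ ≤ 2 ^ (p-2) * (2 ^ (p-1) * (1 + z ^ (p-1))) := by
            have := mul_le_mul_of_nonneg_left hzz h2n
            linarith
        _ = (2 ^ (p-2) * 2 ^ (p-1)) * (1 + z ^ (p-1)) := by ring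
        _ ≤ 2 ^ (2*p) * (1 + z ^ (p-1)) := by
            have he : (2:ℝ) ^ (p-2) * 2 ^ (p-1) = 2 ^ (2*p-3) := by
              rw [← Real.rpow_add two_pos]; ring_nf
            have hle : (2:ℝ) ^ (2*p-3) ≤ 2 ^ (2*p) :=
              Real.rpow_le_rpow_of_exponent_le one_le_two (by linarith)
            have := mul_le_mul_of_nonneg_right (he.le.trans hle) hK0
            linarith
    have hD : |ξ ^ (p-1) - z ^ (p-1)| ≤ (p-1) * M ^ (p-2) * |w| := by
      have h := lip_rpow (by linarith : (1:ℝ) ≤ p-1) hξ0 hz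
      rw [show p - 1 - 1 = p - 2 by ring] at h
      have hnn : 0 ≤ (p-1) * M ^ (p-2) :=
        mul_nonneg (by linarith) (Real.rpow_nonneg hMn _)
      calc |ξ ^ (p-1) - z ^ (p-1)| ≤ (p-1) * M ^ (p-2) * |ξ - z| := h
        _ ≤ (p-1) * M ^ (p-2) * |w| := mul_le_mul_of_nonneg_left hξd hnn
    have habs : |p * (ξ ^ (p-1) - z ^ (p-1)) * w| = p * |ξ ^ (p-1) - z ^ (p-1)| * |w| := by
      rw [abs_mul, abs_mul, abs_of_pos (by linarith : (0:ℝ) < p)]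
    have hcoef : p * (p-1) ≤ 2*p*(p+1) := by nlinarith
    have hKs : (0:ℝ) ≤ (1 + z ^ (p-1)) * (|w| * |w|) := mul_nonneg hK0 hs0
    rw [habs]
    have step1 : p * |ξ ^ (p-1) - z ^ (p-1)| * |w| ≤ p * ((p-1) * M ^ (p-2) * |w|) * |w| := by
      have := mul_le_mul_of_nonneg_left hD (by linarith : (0:ℝ) ≤ p)
      exact mul_le_mul_of_nonneg_right this (abs_nonneg w)
    have step2 : p * ((p-1) * M ^ (p-2) * |w|) * |w|
        ≤ p * ((p-1) * (2 ^ (2*p) * (1 + z ^ (p-1))) * |w|) * |w| := by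
      have h1 : (p-1) * M ^ (p-2) ≤ (p-1) * (2 ^ (2*p) * (1 + z ^ (p-1))) :=
        mul_le_mul_of_nonneg_left hMp (by linarith)
      have h2 : (p-1) * M ^ (p-2) * |w| ≤ (p-1) * (2 ^ (2*p) * (1 + z ^ (p-1))) * |w| :=
        mul_le_mul_of_nonneg_right h1 (abs_nonneg w)
      have h3 := mul_le_mul_of_nonneg_left h2 (by linarith : (0:ℝ) ≤ p)
      exact mul_le_mul_of_nonneg_right h3 (abs_nonneg w)
    have step3 : p * ((p-1) * (2 ^ (2*p) * (1 + z ^ (p-1))) * |w|) * |w|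
        ≤ (2*p*(p+1)*2 ^ (2*p)) * ((1 + z ^ (p-1)) * (|w| * |w|)) := by
      have h1 : p * (p-1) * 2 ^ (2*p) ≤ 2*p*(p+1) * 2 ^ (2*p) :=
        mul_le_mul_of_nonneg_right hcoef h4.le
      have h2 := mul_le_mul_of_nonneg_right h1 hKs
      calc p * ((p-1) * (2 ^ (2*p) * (1 + z ^ (p-1))) * |w|) * |w|
          = (p * (p-1) * 2 ^ (2*p)) * ((1 + z ^ (p-1)) * (|w| * |w|)) := by ring
        _ ≤ (2*p*(p+1)*2 ^ (2*p)) * ((1 + z ^ (p-1)) * (|w| * |w|)) := h2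
    linarith [step1, step2, step3]

/-- Second-order Taylor remainder estimate for `t ↦ t₊^p`: with
`h(z,w) = (z+w)₊^p - z^p - p z^{p-1} w` and `γ = min 1 (p-1)`, there is `c > 0`
(depending only on `p`) with `|h(z,w)| ≤ c(|w|^{min 2 p} + z^{p-γ}|w|^{1+γ})`
for all `z ≥ 0` and `|w| ≤ z + 1`. -/
theorem stmt16 {p : ℝ} (hp : 1 < p) :
    ∃ c > (0 : ℝ), ∀ z : ℝ, 0 ≤ z → ∀ w : ℝ, |w| ≤ z + 1 →
      |max (z + w) 0 ^ p - z ^ p - p * z ^ (p - 1) * w|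
        ≤ c * (|w| ^ min 2 p + z ^ (p - min 1 (p - 1)) * |w| ^ (1 + min 1 (p - 1))) := by
  rcases le_total p 2 with hple | hpge
  · refine ⟨1 + p, by linarith, fun z hz w hwb => ?_⟩
    rw [min_eq_right hple, min_eq_right (by linarith : p - 1 ≤ 1),
      show p - (p - 1) = 1 by ring, show 1 + (p - 1) = p by ring, Real.rpow_one]
    have h1 := caseA hp hple hz (w := w)
    have h2 : 0 ≤ (1 + p) * (z * |w| ^ p) :=
      mul_nonneg (by linarith) (mul_nonneg hz (Real.rpow_nonneg (abs_nonneg w) p))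
    nlinarith [h1, h2]
  · have hpow : (0:ℝ) < 2 ^ (2*p) := Real.rpow_pos_of_pos (by norm_num) _
    refine ⟨2*p*(p+1)*2^(2*p),
      mul_pos (mul_pos (by linarith) (by linarith)) hpow, fun z hz w hwb => ?_⟩
    rw [min_eq_left hpge, min_eq_left (by linarith : (1:ℝ) ≤ p - 1),
      show (1:ℝ) + 1 = (2:ℝ) by norm_num]
    have hsq : |w| ^ (2:ℝ) = |w| * |w| := by
      rw [show (2:ℝ) = ((2:ℕ):ℝ) by norm_num, Real.rpow_natCast]; ring
    have h1 := caseB hpge hz hwb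
    calc |max (z + w) 0 ^ p - z ^ p - p * z ^ (p - 1) * w|
        ≤ (2*p*(p+1)*2^(2*p)) * ((1 + z ^ (p-1)) * (|w| * |w|)) := h1
      _ = (2*p*(p+1)*2^(2*p)) * (|w| ^ (2:ℝ) + z ^ (p - 1) * |w| ^ (2:ℝ)) := by
          rw [hsq]; ring
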